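/- Let ψ : 𝔫⁺ → ℂ be a Lie algebra homomorphism with ψ(L_1) ≠ 0, ψ(L_2) ≠ 0, ψ(I_1) ≠ 0. Let k ∈ ℕ, let λ be a pseudopartition and μ a partition such that μ(i) = λ(i) = 0 for all 0 ≤ i ≤ k. Then maxdeg([L_{k+1}, L_{−λ}I_{−μ}]w) ≤ |λ| + |μ| − k − 1 in M_ψ. -/

import Mathlib

/-!
Common setup: the twisted Heisenberg–Virasoro algebra `𝒱`, its subalgebra `𝔫⁺`,
the universal Whittaker module `M_ψ`, the quotients `L_{ψ,ξ}`, and the notions of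
Whittaker vectors/modules, degrees, etc.
-/

open UniversalEnvelopingAlgebra

attribute [local instance 100] LieRing.ofAssociativeRing

/-- The twisted Heisenberg–Virasoro algebra: a complex Lie algebra with basis
`{L k, I k (k : ℤ), z 0, z 1, z 2}` (here `z 0, z 1, z 2` are the paper's `z₁, z₂, z₃`)
and the prescribed brackets. -/
class THV (V : Type) [LieRing V] [LieAlgebra ℂ V] : Type where
  L : ℤ → V
  I : ℤ → V
  z : Fin 3 → V
  basis : Module.Basis (ℤ ⊕ ℤ ⊕ Fin 3) ℂ V
  basis_L : ∀ k : ℤ, basis (Sum.inl k) = L k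
  basis_I : ∀ k : ℤ, basis (Sum.inr (Sum.inl k)) = I k
  basis_z : ∀ i : Fin 3, basis (Sum.inr (Sum.inr i)) = z i
  lie_LL : ∀ k j : ℤ, ⁅L k, L j⁆ =
    ((j : ℂ) - (k : ℂ)) • L (k + j) +
      (if j = -k then ((k : ℂ) ^ 3 - (k : ℂ)) / 12 else 0) • z 0
  lie_LI : ∀ k j : ℤ, ⁅L k, I j⁆ =
    (j : ℂ) • I (k + j) + (if j = -k then (k : ℂ) ^ 2 - (k : ℂ) else 0) • z 1
  lie_II : ∀ k j : ℤ, ⁅I k, I j⁆ = (if j = -k then (k : ℂ) else 0) • z 2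
  lie_z : ∀ i : Fin 3, ∀ x : V, ⁅z i, x⁆ = 0

namespace THV

variable (V : Type) [LieRing V] [LieAlgebra ℂ V] [THV V]

/-- `𝔫⁺ = span {L k, I k : k ≥ 1}` (a Lie subalgebra of `𝒱`). -/
def nPlus : LieSubalgebra ℂ V :=
  LieSubalgebra.lieSpan ℂ V {x | ∃ k : ℤ, 1 ≤ k ∧ (x = L k ∨ x = I k)}

theorem L_mem_nPlus {k : ℤ} (h : 1 ≤ k) : (L k : V) ∈ nPlus V :=
  LieSubalgebra.subset_lieSpan ⟨k, h, Or.inl rfl⟩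

theorem I_mem_nPlus {k : ℤ} (h : 1 ≤ k) : (I k : V) ∈ nPlus V :=
  LieSubalgebra.subset_lieSpan ⟨k, h, Or.inr rfl⟩

/-- A Whittaker vector of type `ψ` in a `𝒱`-module `W`. -/
def IsWhittakerVector (ψ : nPlus V →ₗ⁅ℂ⁆ ℂ) {W : Type} [AddCommGroup W] [Module ℂ W]
    [LieRingModule V W] (w : W) : Prop :=
  ∀ x : nPlus V, ⁅(x : V), w⁆ = ψ x • w

/-- The universal enveloping algebra `U(𝒱)`. -/
abbrev UEA := UniversalEnvelopingAlgebra ℂ V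

/-- The canonical embedding `𝒱 → U(𝒱)`. -/
noncomputable def ιV : V →ₗ⁅ℂ⁆ UEA V := UniversalEnvelopingAlgebra.ι ℂ

/-- The four central elements `z₀ = I₀, z₁, z₂, z₃` of `U(𝒱)`. -/
noncomputable def zElt : Fin 4 → UEA V
  | 0 => ιV V (I 0)
  | 1 => ιV V (z 0)
  | 2 => ιV V (z 1)
  | 3 => ιV V (z 2)

/-- The left ideal of `U(𝒱)` generated by `{x - ψ(x) : x ∈ 𝔫⁺}`;
`M_ψ = U(𝒱) ⊗_{U(𝔫⁺)} ℂ_ψ` is canonically the quotient by this left ideal. -/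
noncomputable def whittakerIdeal (ψ : nPlus V →ₗ⁅ℂ⁆ ℂ) : Submodule (UEA V) (UEA V) :=
  Submodule.span (UEA V)
    {u | ∃ x : nPlus V, u = ιV V (x : V) - algebraMap ℂ (UEA V) (ψ x)}

/-- The universal Whittaker module `M_ψ`. -/
abbrev Mpsi (ψ : nPlus V →ₗ⁅ℂ⁆ ℂ) := (UEA V) ⧸ whittakerIdeal V ψ

/-- Any quotient of `U(𝒱)` (as a left module over itself) is a `𝒱`-module. -/
noncomputable instance (p : Submodule (UEA V) (UEA V)) : LieRingModule V ((UEA V) ⧸ p) :=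
  letI : LieRingModule (UEA V) ((UEA V) ⧸ p) := LieRingModule.ofAssociativeModule
  LieRingModule.compLieHom _ (ιV V)

noncomputable instance (p : Submodule (UEA V) (UEA V)) : LieModule ℂ V ((UEA V) ⧸ p) :=
  letI : LieRingModule (UEA V) ((UEA V) ⧸ p) := LieRingModule.ofAssociativeModule
  letI : LieModule ℂ (UEA V) ((UEA V) ⧸ p) := LieModule.ofAssociativeModule
  LieModule.compLieHom _ (ιV V)

/-- The cyclic Whittaker vector `w = 1 ⊗ 1` of `M_ψ`. -/
noncomputable def mw (ψ : nPlus V →ₗ⁅ℂ⁆ ℂ) : Mpsi V ψ :=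
  Submodule.Quotient.mk 1

/-- The submodule `Σ_{i} (z_i − ξ_i·1) M_ψ` of `M_ψ`. -/
noncomputable def centralSub (ψ : nPlus V →ₗ⁅ℂ⁆ ℂ) (ξ : Fin 4 → ℂ) :
    Submodule (UEA V) (Mpsi V ψ) :=
  Submodule.span (UEA V)
    {m | ∃ i : Fin 4, ∃ y : Mpsi V ψ, m = (zElt V i - algebraMap ℂ (UEA V) (ξ i)) • y}

/-- The Whittaker module `L_{ψ,ξ} = M_ψ / Σᵢ (z_i − ξ_i·1) M_ψ`. -/
abbrev Lpsixi (ψ : nPlus V →ₗ⁅ℂ⁆ ℂ) (ξ : Fin 4 → ℂ) :=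
  Mpsi V ψ ⧸ centralSub V ψ ξ

noncomputable instance (ψ : nPlus V →ₗ⁅ℂ⁆ ℂ) (q : Submodule (UEA V) (Mpsi V ψ)) :
    LieRingModule V ((Mpsi V ψ) ⧸ q) :=
  letI : LieRingModule (UEA V) ((Mpsi V ψ) ⧸ q) := LieRingModule.ofAssociativeModule
  LieRingModule.compLieHom _ (ιV V)

noncomputable instance (ψ : nPlus V →ₗ⁅ℂ⁆ ℂ) (q : Submodule (UEA V) (Mpsi V ψ)) :
    LieModule ℂ V ((Mpsi V ψ) ⧸ q) :=
  letI : LieRingModule (UEA V) ((Mpsi V ψ) ⧸ q) := LieRingModule.ofAssociativeModule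
  letI : LieModule ℂ (UEA V) ((Mpsi V ψ) ⧸ q) := LieModule.ofAssociativeModule
  LieModule.compLieHom _ (ιV V)

/-- The image `w̄` of the cyclic Whittaker vector in `L_{ψ,ξ}`. -/
noncomputable def lw (ψ : nPlus V →ₗ⁅ℂ⁆ ℂ) (ξ : Fin 4 → ℂ) : Lpsixi V ψ ξ :=
  Submodule.Quotient.mk (mw V ψ)

/-- The size `|λ|` of a pseudopartition recorded as its multiplicity function. -/
def pdeg (f : ℕ →₀ ℕ) : ℕ := f.sum fun k m => k * m

/-- `L_{-λ} = L_{-λ_s} ⋯ L_{-λ_1} = ⋯ L_{-1}^{λ(1)} L_0^{λ(0)} ∈ U(𝒱)`,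
for a pseudopartition `λ` given by its multiplicity function. -/
noncomputable def Lword (lam : ℕ →₀ ℕ) : UEA V :=
  (((List.range (lam.support.sup id + 1)).reverse).map
    fun k : ℕ => (ιV V (L (-(k : ℤ)))) ^ (lam k)).prod

/-- `I_{-μ} = I_{-μ_r} ⋯ I_{-μ_1} = ⋯ I_{-2}^{μ(2)} I_{-1}^{μ(1)} ∈ U(𝒱)`. -/
noncomputable def Iword (mu : ℕ →₀ ℕ) : UEA V :=
  (((List.range (mu.support.sup id + 1)).reverse).map
    fun k : ℕ => (ιV V (I (-(k : ℤ)))) ^ (mu k)).prod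

/-- `z^t = z₀^{t₀} z₁^{t₁} z₂^{t₂} z₃^{t₃} ∈ U(𝒱)`. -/
noncomputable def zword (t : Fin 4 → ℕ) : UEA V :=
  ((List.finRange 4).map fun i => (zElt V i) ^ (t i)).prod

/-- Index type for the PBW-type basis of `M_ψ`: a 4-tuple `t`, a pseudopartition `λ`,
and a partition `μ` (a multiplicity function with `μ(0) = 0`). -/
abbrev WIdx : Type := (Fin 4 → ℕ) × (ℕ →₀ ℕ) × {g : ℕ →₀ ℕ // g 0 = 0}

/-- The property that `B` is the standard basis `{z^t L_{-λ} I_{-μ} w}` of `M_ψ`. -/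
def IsStdBasis (ψ : nPlus V →ₗ⁅ℂ⁆ ℂ) (B : Module.Basis WIdx ℂ (Mpsi V ψ)) : Prop :=
  ∀ (t : Fin 4 → ℕ) (lam : ℕ →₀ ℕ) (mu : {g : ℕ →₀ ℕ // g 0 = 0}),
    B (t, lam, mu) = (zword V t * Lword V lam * Iword V mu.1) • mw V ψ

/-- `maxdeg` of a vector of `M_ψ` with respect to the standard basis
(`⊥` plays the role of `-∞`). -/
noncomputable def maxdeg (ψ : nPlus V →ₗ⁅ℂ⁆ ℂ) (B : Module.Basis WIdx ℂ (Mpsi V ψ))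
    (v : Mpsi V ψ) : WithBot ℤ :=
  ((B.repr v).support.image fun p => ((pdeg p.2.1 : ℤ) + (pdeg p.2.2.1 : ℤ))).max

/-- `max_{L_0}` of a vector of `M_ψ`: the largest `λ(0)` over basis vectors occurring
with a nonzero coefficient. -/
noncomputable def maxL0 (ψ : nPlus V →ₗ⁅ℂ⁆ ℂ) (B : Module.Basis WIdx ℂ (Mpsi V ψ))
    (v : Mpsi V ψ) : WithBot ℤ :=
  ((B.repr v).support.image fun p => (p.2.1 0 : ℤ)).max

end THV

/-!
Filter `M_ψ` by degree, `F_d = span {z^t L_{-λ} I_{-μ} w : |λ| + |μ| ≤ d}` (`degFiltration`),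
and let `G_d ⊆ U(𝒱)` be the operators with `G_d F_e ⊆ F_{e+d}` (`filtrationShift`); these form
a multiplicative `ℤ`-indexed family.
The central elements lie in `G_0` and `L_{-i}` lies in `G_i`: to bring `L_{-i} L_{-λ}` into
normal order one moves `L_{-i}` past the parts `j > i` of `λ`, and each swap produces
`(i - j) L_{-(i+j)} L_{-λ'}`, again a basis vector, plus `L_{-j} L_{-i} L_{-λ'}`, which is handled
at a strictly smaller degree. The same holds for `I_{-i}` on the span of the vectors `z^t I_{-μ} w`
(indices in `lFreeIdx`), where the `I_{-i}` simply commute.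

Now `[L_{k+1}, -]` is a derivation, and for `i ≥ k + 1` both `[L_{k+1}, L_{-i}]` and
`[L_{k+1}, I_{-i}]` are combinations of `L_{k+1-i}` (resp. `I_{k+1-i}`) and a central element,
so they sit `k + 1` steps below `L_{-i}` (resp. `I_{-i}`). Expanding
`[L_{k+1}, L_{-λ} I_{-μ}] w = [L_{k+1}, L_{-λ}] I_{-μ} w + L_{-λ} [L_{k+1}, I_{-μ}] w`
gives a vector of `F_{|λ| + |μ| - k - 1}`.
-/

section FiltrationShift

variable {R M : Type*} [CommSemiring R] [AddCommMonoid M] [Module R M]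

def filtrationShift (A : Type*) [Semiring A] [Algebra R A] [Module A M] [IsScalarTower R A M]
    (F : ℤ → Submodule R M) (d : ℤ) : Submodule R A where
  carrier := {u | ∀ e, ∀ v ∈ F e, u • v ∈ F (e + d)}
  add_mem' hu hv e v h := by rw [add_smul]; exact add_mem (hu e v h) (hv e v h)
  zero_mem' e v _ := by rw [zero_smul]; exact zero_mem _
  smul_mem' c u hu e v h := by rw [smul_assoc]; exact Submodule.smul_mem _ c (hu e v h)

variable {A : Type*} [Semiring A] [Algebra R A] [Module A M] [IsScalarTower R A M]
  {F : ℤ → Submodule R M}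

theorem smul_mem_of_mem_filtrationShift {u : A} {d e : ℤ} {v : M}
    (hu : u ∈ filtrationShift A F d) (hv : v ∈ F e) : u • v ∈ F (e + d) :=
  hu e v hv

instance : SetLike.GradedMonoid (filtrationShift A F) where
  one_mem e v h := by rwa [one_smul, add_zero]
  mul_mem i j u u' hu hu' e v h := by
    rw [mul_smul, show e + (i + j) = e + j + i by ring]
    exact hu _ _ (hu' e v h)

end FiltrationShift

theorem Ring.lie_mul {A : Type*} [Ring A] (x a b : A) :
    ⁅x, a * b⁆ = ⁅x, a⁆ * b + a * ⁅x, b⁆ := by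
  simp only [Ring.lie_def]; noncomm_ring

theorem lie_pow_mem_graded {A S : Type*} [Ring A] [SetLike S A] [AddSubmonoidClass S A]
    {G : ℤ → S} [SetLike.GradedMonoid G] {x y : A} {e c : ℤ} (hy : y ∈ G e)
    (hxy : ⁅x, y⁆ ∈ G (e - c)) (n : ℕ) : ⁅x, y ^ n⁆ ∈ G (n * e - c) := by
  induction n with
  | zero => simp [Ring.lie_def, zero_mem]
  | succ n ih =>
    rw [pow_succ, Ring.lie_mul]
    refine add_mem ?_ ?_
    · convert SetLike.mul_mem_graded ih hy using 2; push_cast; ring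
    · convert SetLike.mul_mem_graded (SetLike.pow_mem_graded n hy) hxy using 2
      rw [nsmul_eq_mul]; push_cast; ring

section DescPowProd

variable {M : Type*} [Monoid M] (g : ℕ → M) (f : ℕ →₀ ℕ)

def descPowProd (N : ℕ) : M := ((List.range N).reverse.map fun k => g k ^ f k).prod

theorem descPowProd_zero : descPowProd g f 0 = 1 := rfl

theorem descPowProd_succ (N : ℕ) :
    descPowProd g f (N + 1) = g N ^ f N * descPowProd g f N := by
  simp [descPowProd, List.range_succ]

variable {g f}

theorem descPowProd_congr_left {f' : ℕ →₀ ℕ} {N : ℕ} (h : ∀ k < N, f k = f' k) :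
    descPowProd g f N = descPowProd g f' N := by
  unfold descPowProd
  congr 1
  exact List.map_congr_left fun k hk => by rw [h k (List.mem_range.1 (List.mem_reverse.1 hk))]

theorem descPowProd_eq_of_le {N N' : ℕ} (hf : ∀ k, N ≤ k → f k = 0) (h : N ≤ N') :
    descPowProd g f N' = descPowProd g f N := by
  induction N', h using Nat.le_induction with
  | base => rfl
  | succ N' h ih => rw [descPowProd_succ, hf N' h, pow_zero, one_mul, ih]

theorem descPowProd_congr {N N' : ℕ} (hf : ∀ k, N ≤ k → f k = 0)
    (hf' : ∀ k, N' ≤ k → f k = 0) : descPowProd g f N = descPowProd g f N' := by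
  rw [← descPowProd_eq_of_le hf (le_max_left N N'), descPowProd_eq_of_le hf' (le_max_right N N')]

theorem descPowProd_add_single {i N : ℕ} (hi : i < N)
    (hc : ∀ k, i < k → k < N → Commute (g i) (g k ^ f k)) :
    descPowProd g (f + Finsupp.single i 1) N = g i * descPowProd g f N := by
  induction N with
  | zero => omega
  | succ N ih =>
    rw [descPowProd_succ, descPowProd_succ]
    rcases (Nat.lt_succ_iff.1 hi).eq_or_lt with rfl | hlt
    · rw [Finsupp.add_apply, Finsupp.single_eq_same, pow_succ', mul_assoc,
        descPowProd_congr_left (f' := f) fun k hk => by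
          rw [Finsupp.add_apply, Finsupp.single_eq_of_ne hk.ne, add_zero]]
    · rw [Finsupp.add_apply, Finsupp.single_eq_of_ne (by omega), add_zero,
        ih hlt (fun k hik hk => hc k hik (by omega)), ← mul_assoc, ← mul_assoc,
        (hc N hlt (by omega)).eq]

end DescPowProd

section GradedDescPowProd

variable {A S : Type*} [Ring A] [SetLike S A] {G : ℤ → S} [SetLike.GradedMonoid G]
  {g : ℕ → A} {f : ℕ →₀ ℕ}

theorem descPowProd_mem_graded (hg : ∀ k, f k ≠ 0 → g k ∈ G k) (N : ℕ) :
    descPowProd g f N ∈ G (∑ k ∈ Finset.range N, (f k * k : ℤ)) := by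
  induction N with
  | zero => exact SetLike.one_mem_graded G
  | succ N ih =>
    rw [descPowProd_succ, Finset.sum_range_succ, add_comm]
    by_cases hN : f N = 0
    · simpa [hN] using ih
    · convert SetLike.mul_mem_graded (SetLike.pow_mem_graded (f N) (hg N hN)) ih using 2
      rw [nsmul_eq_mul]

theorem lie_descPowProd_mem_graded [AddSubmonoidClass S A] {x : A} {c : ℤ}
    (hg : ∀ k, f k ≠ 0 → g k ∈ G k) (hx : ∀ k, f k ≠ 0 → ⁅x, g k⁆ ∈ G (k - c)) (N : ℕ) :
    ⁅x, descPowProd g f N⁆ ∈ G (∑ k ∈ Finset.range N, (f k * k : ℤ) - c) := by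
  induction N with
  | zero => simp [descPowProd_zero, Ring.lie_def, zero_mem]
  | succ N ih =>
    rw [descPowProd_succ, Finset.sum_range_succ, Ring.lie_mul]
    by_cases hN : f N = 0
    · simpa [hN, Ring.lie_def] using ih
    refine add_mem ?_ ?_
    · convert SetLike.mul_mem_graded (lie_pow_mem_graded (hg N hN) (hx N hN) (f N))
        (descPowProd_mem_graded hg N) using 2
      ring
    · convert SetLike.mul_mem_graded (SetLike.pow_mem_graded (f N) (hg N hN)) ih using 2
      rw [nsmul_eq_mul]; ring

end GradedDescPowProd

theorem Finsupp.apply_eq_zero_of_support_sup_lt (f : ℕ →₀ ℕ) {k : ℕ}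
    (hk : f.support.sup id < k) : f k = 0 := by
  by_contra h
  exact absurd (Finset.le_sup (f := id) (Finsupp.mem_support_iff.2 h)) (by simpa using hk)

theorem Finsupp.exists_eq_add_single_of_ne_zero {f : ℕ →₀ ℕ} {k : ℕ} (hk : f k ≠ 0) :
    ∃ f' j, k ≤ j ∧ f = f' + Finsupp.single j 1 ∧ ∀ m, j < m → f' m = 0 := by
  have hne : f.support.Nonempty := ⟨k, Finsupp.mem_support_iff.2 hk⟩
  set j := f.support.max' hne
  have hj : f j ≠ 0 := Finsupp.mem_support_iff.1 (f.support.max'_mem hne)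
  have hmax : ∀ m, j < m → f m = 0 := fun m hm => by
    by_contra h
    exact absurd (f.support.le_max' m (Finsupp.mem_support_iff.2 h)) (not_le.2 hm)
  refine ⟨f - Finsupp.single j 1, j, f.support.le_max' k (Finsupp.mem_support_iff.2 hk),
    (tsub_add_cancel_of_le (Finsupp.single_le_iff.2 (Nat.one_le_iff_ne_zero.2 hj))).symm,
    fun m hm => by simp [hmax m hm]⟩

namespace THV

theorem pdeg_zero : pdeg 0 = 0 := by simp [pdeg]

theorem pdeg_add_single (f : ℕ →₀ ℕ) (i : ℕ) : pdeg (f + Finsupp.single i 1) = pdeg f + i := by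
  rw [pdeg, Finsupp.sum_add_index' (by simp) (fun _ _ _ => by ring),
    Finsupp.sum_single_index (by simp), mul_one, pdeg]

theorem pdeg_eq_sum_range {f : ℕ →₀ ℕ} {N : ℕ} (hf : ∀ k, N ≤ k → f k = 0) :
    (pdeg f : ℤ) = ∑ k ∈ Finset.range N, (f k * k : ℤ) := by
  rw [pdeg, Finsupp.sum_of_support_subset f (s := Finset.range N) ?_ _ (by simp)]
  · push_cast; simp only [mul_comm]
  · intro k hk
    by_contra h
    exact Finsupp.mem_support_iff.1 hk (hf k (by simpa using h))

section GradedPdeg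

variable {A S : Type*} [Ring A] [SetLike S A] {G : ℤ → S} [SetLike.GradedMonoid G]
  {g : ℕ → A} {f : ℕ →₀ ℕ}

theorem descPowProd_mem_graded_pdeg (hg : ∀ k, f k ≠ 0 → g k ∈ G k) :
    descPowProd g f (f.support.sup id + 1) ∈ G (pdeg f) := by
  rw [pdeg_eq_sum_range fun _ hk => f.apply_eq_zero_of_support_sup_lt hk]
  exact descPowProd_mem_graded hg _

theorem lie_descPowProd_mem_graded_pdeg [AddSubmonoidClass S A] {x : A} {c : ℤ}
    (hg : ∀ k, f k ≠ 0 → g k ∈ G k) (hx : ∀ k, f k ≠ 0 → ⁅x, g k⁆ ∈ G (k - c)) :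
    ⁅x, descPowProd g f (f.support.sup id + 1)⁆ ∈ G (pdeg f - c) := by
  rw [pdeg_eq_sum_range fun _ hk => f.apply_eq_zero_of_support_sup_lt hk]
  exact lie_descPowProd_mem_graded hg hx _

end GradedPdeg

theorem ιV_commute_of_lie_eq_zero {V : Type} [LieRing V] [LieAlgebra ℂ V] {x y : V}
    (h : ⁅x, y⁆ = 0) : Commute (ιV V x) (ιV V y) := by
  rw [Commute, SemiconjBy, ← sub_eq_zero, ← Ring.lie_def, ← LieHom.map_lie, h, map_zero]

variable {V : Type} [LieRing V] [LieAlgebra ℂ V] [THV V]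

theorem lie_I_zero_left (x : V) : ⁅(I 0 : V), x⁆ = 0 := by
  have hbasis : ∀ b, ⁅(I 0 : V), (THV.basis b : V)⁆ = 0 := by
    rintro (k | k | j)
    · rw [basis_L, ← lie_skew, lie_LI]
      rcases eq_or_ne k 0 with rfl | hk
      · simp
      · simp [show (0 : ℤ) ≠ -k by omega]
    · rw [basis_I, lie_II]
      rcases eq_or_ne k 0 with rfl | hk
      · simp
      · simp [hk]
    · rw [basis_z, ← lie_skew, lie_z, neg_zero]
  have hx : x ∈ Submodule.span ℂ (Set.range (THV.basis : Module.Basis _ ℂ V)) := by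
    rw [Module.Basis.span_eq]; trivial
  induction hx using Submodule.span_induction with
  | mem y hy => obtain ⟨b, rfl⟩ := hy; exact hbasis b
  | zero => exact lie_zero _
  | add y y' _ _ hy hy' => rw [lie_add, hy, hy', add_zero]
  | smul c y _ hy => rw [lie_smul, hy, smul_zero]

theorem zElt_commute_ιV (j : Fin 4) (x : V) : Commute (zElt V j) (ιV V x) := by
  fin_cases j
  · exact ιV_commute_of_lie_eq_zero (lie_I_zero_left x)
  all_goals exact ιV_commute_of_lie_eq_zero (lie_z _ x)

theorem ιV_commute_zword (x : V) (t : Fin 4 → ℕ) : Commute (ιV V x) (zword V t) :=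
  Commute.list_prod_right _ _ fun _ hy => by
    obtain ⟨j, -, rfl⟩ := List.mem_map.1 hy
    exact (zElt_commute_ιV j x).symm.pow_right _

theorem zElt_mul_zword (j : Fin 4) (t : Fin 4 → ℕ) :
    zElt V j * zword V t = zword V (t + Pi.single j 1) := by
  have hz : ∀ a b : Fin 4, Commute (zElt V a) (zElt V b) := fun a b => by
    fin_cases b <;> exact zElt_commute_ιV a _
  fin_cases j <;>
    simp [zword, List.finRange_succ, pow_succ', mul_assoc, ((hz _ _).pow_right _).left_comm]

theorem zword_zero : zword V 0 = 1 := by simp [zword]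

theorem ιV_L_mul_L (i j : ℕ) :
    ιV V (L (-(i : ℤ))) * ιV V (L (-(j : ℤ))) =
      ιV V (L (-(j : ℤ))) * ιV V (L (-(i : ℤ))) +
        ((i : ℂ) - j) • ιV V (L (-((i + j : ℕ) : ℤ))) := by
  rw [← sub_eq_iff_eq_add', ← Ring.lie_def, ← LieHom.map_lie, lie_LL]
  split_ifs with h
  · obtain ⟨rfl, rfl⟩ : i = 0 ∧ j = 0 := by omega
    simp
  · rw [zero_smul, add_zero, map_smul]; push_cast; ring_nf

theorem Lword_zero : Lword V 0 = 1 := by simp [Lword]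

theorem Iword_zero : Iword V 0 = 1 := by simp [Iword]

theorem Lword_eq_descPowProd {f : ℕ →₀ ℕ} {N : ℕ} (hN : ∀ k, N ≤ k → f k = 0) :
    Lword V f = descPowProd (fun k => ιV V (L (-(k : ℤ)))) f N :=
  descPowProd_congr (fun _ hk => f.apply_eq_zero_of_support_sup_lt hk) hN

theorem Iword_eq_descPowProd {f : ℕ →₀ ℕ} {N : ℕ} (hN : ∀ k, N ≤ k → f k = 0) :
    Iword V f = descPowProd (fun k => ιV V (I (-(k : ℤ)))) f N :=
  descPowProd_congr (fun _ hk => f.apply_eq_zero_of_support_sup_lt hk) hN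

theorem Lword_add_single {f : ℕ →₀ ℕ} {i : ℕ} (hf : ∀ k, i < k → f k = 0) :
    Lword V (f + Finsupp.single i 1) = ιV V (L (-(i : ℤ))) * Lword V f := by
  have hf' : ∀ k, i + 1 ≤ k → (f + Finsupp.single i 1 : ℕ →₀ ℕ) k = 0 := fun k hk => by
    simp [hf k hk, Finsupp.single_eq_of_ne (show k ≠ i by omega)]
  rw [Lword_eq_descPowProd hf', Lword_eq_descPowProd (N := i + 1) hf,
    descPowProd_add_single (Nat.lt_succ_self i) fun k hik _ => by simp [hf k hik]]

theorem Iword_add_single (f : ℕ →₀ ℕ) (i : ℕ) :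
    Iword V (f + Finsupp.single i 1) = ιV V (I (-(i : ℤ))) * Iword V f := by
  set N := max (f.support.sup id + 1) (i + 1)
  have hf : ∀ k, N ≤ k → f k = 0 := fun k hk => f.apply_eq_zero_of_support_sup_lt (by omega)
  have hf' : ∀ k, N ≤ k → (f + Finsupp.single i 1 : ℕ →₀ ℕ) k = 0 := fun k hk => by
    simp [hf k hk, Finsupp.single_eq_of_ne (show k ≠ i by omega)]
  have hcomm : ∀ k : ℕ, Commute (ιV V (I (-(i : ℤ)))) (ιV V (I (-(k : ℤ)))) := fun k => by
    refine ιV_commute_of_lie_eq_zero ?_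
    rw [lie_II]
    split_ifs with h
    · obtain rfl : i = 0 := by omega
      simp
    · exact zero_smul ℂ _
  rw [Iword_eq_descPowProd hf', Iword_eq_descPowProd hf,
    descPowProd_add_single (by omega) fun k _ _ => (hcomm k).pow_right _]

variable {ψ : nPlus V →ₗ⁅ℂ⁆ ℂ} (B : Module.Basis WIdx ℂ (Mpsi V ψ))

def idxDeg (p : WIdx) : ℕ := pdeg p.2.1 + pdeg p.2.2.1

noncomputable def degFiltration (s : Set WIdx) (d : ℤ) : Submodule ℂ (Mpsi V ψ) :=
  Submodule.span ℂ (B '' {p | p ∈ s ∧ (idxDeg p : ℤ) ≤ d})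

def lFreeIdx : Set WIdx := {p | p.2.1 = 0}

variable {B}

theorem maxdeg_le_of_mem_degFiltration {s : Set WIdx} {v : Mpsi V ψ} {d : ℤ}
    (h : v ∈ degFiltration B s d) : maxdeg V ψ B v ≤ d := by
  rw [degFiltration, Module.Basis.mem_span_image] at h
  refine Finset.max_le fun _ hx => ?_
  obtain ⟨p, hp, rfl⟩ := Finset.mem_image.1 hx
  exact WithBot.coe_le_coe.2 (h hp).2

theorem degFiltration_mono {s s' : Set WIdx} {d d' : ℤ} (hs : s ⊆ s') (hd : d ≤ d') :
    degFiltration B s d ≤ degFiltration B s' d' :=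
  Submodule.span_mono (Set.image_mono fun _ hp => ⟨hs hp.1, hp.2.trans hd⟩)

theorem basis_mem_degFiltration {s : Set WIdx} {p : WIdx} (hp : p ∈ s) {d : ℤ}
    (hd : (idxDeg p : ℤ) ≤ d) : B p ∈ degFiltration B s d :=
  Submodule.subset_span ⟨p, ⟨hp, hd⟩, rfl⟩

theorem smul_mem_degFiltration {s : Set WIdx} {u : UEA V} {d e : ℤ}
    (h : ∀ p ∈ s, (idxDeg p : ℤ) ≤ e → u • B p ∈ degFiltration B s (idxDeg p + d))
    {v : Mpsi V ψ} (hv : v ∈ degFiltration B s e) : u • v ∈ degFiltration B s (e + d) := by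
  induction hv using Submodule.span_induction with
  | mem v hv =>
    obtain ⟨p, ⟨hp, hpe⟩, rfl⟩ := hv
    exact degFiltration_mono le_rfl (by omega) (h p hp hpe)
  | zero => rw [smul_zero]; exact zero_mem _
  | add v v' _ _ hv hv' => rw [smul_add]; exact add_mem hv hv'
  | smul c v _ hv => rw [smul_comm]; exact Submodule.smul_mem _ c hv

theorem mem_filtrationShift_degFiltration {s : Set WIdx} {u : UEA V} {d : ℤ}
    (h : ∀ p ∈ s, u • B p ∈ degFiltration B s (idxDeg p + d)) :
    u ∈ filtrationShift (UEA V) (degFiltration B s) d :=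
  fun _ _ => smul_mem_degFiltration fun p hp _ => h p hp

theorem basis_zero_eq (hB : IsStdBasis V ψ B) (lam : ℕ →₀ ℕ) (mu : {g : ℕ →₀ ℕ // g 0 = 0}) :
    B (0, lam, mu) = (Lword V lam * Iword V mu.1) • mw V ψ := by
  rw [hB, zword_zero, one_mul]

theorem mw_mem_degFiltration (hB : IsStdBasis V ψ B) : mw V ψ ∈ degFiltration B lFreeIdx 0 := by
  have h : mw V ψ = B (0, 0, ⟨0, Finsupp.zero_apply⟩) := by
    rw [basis_zero_eq hB, Lword_zero, Iword_zero, one_mul, one_smul]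
  rw [h]
  exact basis_mem_degFiltration (show (0, 0, _) ∈ lFreeIdx from rfl) (by simp [idxDeg, pdeg_zero])

theorem zElt_smul_basis (hB : IsStdBasis V ψ B) (j : Fin 4) (p : WIdx) :
    zElt V j • B p = B (p.1 + Pi.single j 1, p.2) := by
  obtain ⟨t, lam, mu⟩ := p
  rw [hB, hB, smul_smul, ← mul_assoc, ← mul_assoc, zElt_mul_zword]

theorem zElt_mem_filtrationShift (hB : IsStdBasis V ψ B) (j : Fin 4) {s : Set WIdx}
    (hs : ∀ p ∈ s, (p.1 + Pi.single j 1, p.2) ∈ s) :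
    zElt V j ∈ filtrationShift (UEA V) (degFiltration B s) 0 :=
  mem_filtrationShift_degFiltration fun p hp => by
    rw [zElt_smul_basis hB, add_zero]
    exact basis_mem_degFiltration (hs p hp) le_rfl

theorem zword_mem_graded {S : Type*} [SetLike S (UEA V)] {G : ℤ → S} [SetLike.GradedMonoid G]
    (h : ∀ j, zElt V j ∈ G 0) (t : Fin 4 → ℕ) : zword V t ∈ G 0 := by
  rw [zword]
  simpa using SetLike.list_prod_map_mem_graded (List.finRange 4) (fun _ => (0 : ℤ)) _
    fun j _ => by simpa using SetLike.pow_mem_graded (t j) (h j)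

theorem Lneg_mul_word_smul_mem (hB : IsStdBasis V ψ B) {D : ℕ}
    (hlow : ∀ (j : ℕ) (e : ℤ) (v : Mpsi V ψ), e < D → v ∈ degFiltration B Set.univ e →
      ιV V (L (-(j : ℤ))) • v ∈ degFiltration B Set.univ (e + j))
    (i : ℕ) (lam : ℕ →₀ ℕ) (mu : {g : ℕ →₀ ℕ // g 0 = 0}) (hD : pdeg lam + pdeg mu.1 ≤ D) :
    (ιV V (L (-(i : ℤ))) * Lword V lam * Iword V mu.1) • mw V ψ ∈
      degFiltration B Set.univ (pdeg lam + pdeg mu.1 + i) := by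
  by_cases hlam : ∀ k, i < k → lam k = 0
  · rw [← Lword_add_single hlam, ← basis_zero_eq hB]
    refine basis_mem_degFiltration (Set.mem_univ _) ?_
    simp [idxDeg, pdeg_add_single]; omega
  push Not at hlam
  obtain ⟨k, hik, hk⟩ := hlam
  obtain ⟨lam', j, hkj, rfl, hlam'⟩ := Finsupp.exists_eq_add_single_of_ne_zero hk
  have hdeg := pdeg_add_single lam' j
  rw [Lword_add_single hlam', ← mul_assoc, ιV_L_mul_L, add_mul, add_mul, add_smul]
  refine add_mem ?_ ?_
  · have hsplit :
        (ιV V (L (-(j : ℤ))) * ιV V (L (-(i : ℤ))) * Lword V lam' * Iword V mu.1) • mw V ψ =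
          ιV V (L (-(j : ℤ))) • ιV V (L (-(i : ℤ))) • B (0, lam', mu) := by
      rw [basis_zero_eq hB]; simp only [mul_smul]
    rw [hsplit]
    -- both applications of `hlow` are below degree `D` because `i < j`
    have hinner := hlow i _ _ (by simp only [idxDeg]; omega)
      (basis_mem_degFiltration (p := (0, lam', mu)) (Set.mem_univ _) le_rfl)
    convert hlow j _ _ (by simp [idxDeg]; omega) hinner using 2
    simp [idxDeg]; omega
  · rw [smul_mul_assoc, smul_mul_assoc, smul_assoc,
      ← Lword_add_single fun m hm => hlam' m (by omega), ← basis_zero_eq hB]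
    refine Submodule.smul_mem _ _ (basis_mem_degFiltration (Set.mem_univ _) ?_)
    simp [idxDeg, pdeg_add_single]; omega

theorem Lneg_mem_filtrationShift (hB : IsStdBasis V ψ B) (i : ℕ) :
    ιV V (L (-(i : ℤ))) ∈ filtrationShift (UEA V) (degFiltration B Set.univ) i := by
  suffices h : ∀ (D i : ℕ) (p : WIdx), idxDeg p ≤ D →
      ιV V (L (-(i : ℤ))) • B p ∈ degFiltration B Set.univ (idxDeg p + i) from
    mem_filtrationShift_degFiltration fun p _ => h _ i p le_rfl
  intro D
  induction D using Nat.strong_induction_on with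
  | _ D ih =>
    rintro i ⟨t, lam, mu⟩ hp
    have hlow : ∀ (j : ℕ) (e : ℤ) (v : Mpsi V ψ), e < D → v ∈ degFiltration B Set.univ e →
        ιV V (L (-(j : ℤ))) • v ∈ degFiltration B Set.univ (e + j) := fun j e v he hv =>
      smul_mem_degFiltration (fun p _ hpe => ih (idxDeg p) (by omega) j p le_rfl) hv
    have hz : zword V t ∈ filtrationShift (UEA V) (degFiltration B Set.univ) 0 :=
      zword_mem_graded (fun j => zElt_mem_filtrationShift hB j fun _ _ => Set.mem_univ _) t
    rw [hB, smul_smul, ← mul_assoc, ← mul_assoc, (ιV_commute_zword _ t).eq, mul_assoc, mul_assoc,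
      mul_smul, ← mul_assoc]
    convert smul_mem_of_mem_filtrationShift hz (Lneg_mul_word_smul_mem hB hlow i lam mu hp) using 2
    simp [idxDeg]

theorem Ineg_mul_Iword_smul_mem (hB : IsStdBasis V ψ B) (i : ℕ)
    (mu : {g : ℕ →₀ ℕ // g 0 = 0}) :
    (ιV V (I (-(i : ℤ))) * Iword V mu.1) • mw V ψ ∈
      degFiltration B lFreeIdx (pdeg mu.1 + i) := by
  rcases eq_or_ne i 0 with rfl | hi
  · have hbasis : Iword V mu.1 • mw V ψ = B (0, 0, mu) := by
      rw [basis_zero_eq hB, Lword_zero, one_mul]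
    rw [show ιV V (I (-((0 : ℕ) : ℤ))) = zElt V 0 by simp [zElt], mul_smul, hbasis]
    convert smul_mem_of_mem_filtrationShift
      (zElt_mem_filtrationShift hB 0 (s := lFreeIdx) fun _ hp => hp)
      (basis_mem_degFiltration (show (0, 0, mu) ∈ lFreeIdx from rfl) le_rfl) using 2
    simp [idxDeg, pdeg_zero]
  · have hmu : (mu.1 + Finsupp.single i 1 : ℕ →₀ ℕ) 0 = 0 := by
      simp [mu.2, Finsupp.single_eq_of_ne (Ne.symm hi)]
    rw [← Iword_add_single, ← one_mul (Iword V _), ← Lword_zero, ← basis_zero_eq hB _ ⟨_, hmu⟩]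
    refine basis_mem_degFiltration (show (0, 0, ⟨_, hmu⟩) ∈ lFreeIdx from rfl) ?_
    simp [idxDeg, pdeg_add_single, pdeg_zero]

theorem Ineg_mem_filtrationShift (hB : IsStdBasis V ψ B) (i : ℕ) :
    ιV V (I (-(i : ℤ))) ∈ filtrationShift (UEA V) (degFiltration B lFreeIdx) i := by
  refine mem_filtrationShift_degFiltration ?_
  rintro ⟨t, lam, mu⟩ (rfl : lam = 0)
  have hz : zword V t ∈ filtrationShift (UEA V) (degFiltration B lFreeIdx) 0 :=
    zword_mem_graded (fun j => zElt_mem_filtrationShift hB j fun _ hp => hp) t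
  rw [hB, Lword_zero, mul_one, smul_smul, ← mul_assoc, (ιV_commute_zword _ t).eq, mul_assoc,
    mul_smul]
  convert smul_mem_of_mem_filtrationShift hz (Ineg_mul_Iword_smul_mem hB i mu) using 2
  simp [idxDeg, pdeg_zero]

theorem Lword_mem_filtrationShift (hB : IsStdBasis V ψ B) (lam : ℕ →₀ ℕ) :
    Lword V lam ∈ filtrationShift (UEA V) (degFiltration B Set.univ) (pdeg lam) :=
  descPowProd_mem_graded_pdeg fun i _ => by simpa using Lneg_mem_filtrationShift hB i

theorem Iword_mem_filtrationShift (hB : IsStdBasis V ψ B) (mu : ℕ →₀ ℕ) :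
    Iword V mu ∈ filtrationShift (UEA V) (degFiltration B lFreeIdx) (pdeg mu) :=
  descPowProd_mem_graded_pdeg fun i _ => by simpa using Ineg_mem_filtrationShift hB i

theorem lie_L_L_mem_filtrationShift (hB : IsStdBasis V ψ B) {m n : ℤ} (hmn : m + n ≤ 0) :
    ⁅ιV V (L m), ιV V (L n)⁆ ∈
      filtrationShift (UEA V) (degFiltration B Set.univ) (-(m + n)) := by
  obtain ⟨i, hi⟩ : ∃ i : ℕ, m + n = -i := ⟨(m + n).natAbs, by omega⟩
  rw [← LieHom.map_lie, lie_LL, map_add, map_smul, map_smul, hi, neg_neg]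
  refine add_mem (Submodule.smul_mem _ _ (Lneg_mem_filtrationShift hB i)) ?_
  split_ifs with h
  · rw [show (i : ℤ) = 0 by omega]
    exact Submodule.smul_mem _ _ (zElt_mem_filtrationShift hB 1 fun _ _ => Set.mem_univ _)
  · rw [zero_smul]; exact zero_mem _

theorem lie_L_I_mem_filtrationShift (hB : IsStdBasis V ψ B) {m n : ℤ} (hmn : m + n ≤ 0) :
    ⁅ιV V (L m), ιV V (I n)⁆ ∈
      filtrationShift (UEA V) (degFiltration B lFreeIdx) (-(m + n)) := by
  obtain ⟨i, hi⟩ : ∃ i : ℕ, m + n = -i := ⟨(m + n).natAbs, by omega⟩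
  rw [← LieHom.map_lie, lie_LI, map_add, map_smul, map_smul, hi, neg_neg]
  refine add_mem (Submodule.smul_mem _ _ (Ineg_mem_filtrationShift hB i)) ?_
  split_ifs with h
  · rw [show (i : ℤ) = 0 by omega]
    exact Submodule.smul_mem _ _ (zElt_mem_filtrationShift hB 2 (s := lFreeIdx) fun _ hp => hp)
  · rw [zero_smul]; exact zero_mem _

theorem lie_L_Lword_mem_filtrationShift (hB : IsStdBasis V ψ B) {m : ℤ} {lam : ℕ →₀ ℕ}
    (hlam : ∀ i, lam i ≠ 0 → m ≤ i) :
    ⁅ιV V (L m), Lword V lam⁆ ∈ filtrationShift (UEA V) (degFiltration B Set.univ) (pdeg lam - m) :=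
  lie_descPowProd_mem_graded_pdeg (fun i _ => by simpa using Lneg_mem_filtrationShift hB i)
    fun i hi => by
      simpa [sub_eq_add_neg, add_comm] using
        lie_L_L_mem_filtrationShift hB (n := -i) (by linarith [hlam i hi])

theorem lie_L_Iword_mem_filtrationShift (hB : IsStdBasis V ψ B) {m : ℤ} {mu : ℕ →₀ ℕ}
    (hmu : ∀ i, mu i ≠ 0 → m ≤ i) :
    ⁅ιV V (L m), Iword V mu⁆ ∈ filtrationShift (UEA V) (degFiltration B lFreeIdx) (pdeg mu - m) :=
  lie_descPowProd_mem_graded_pdeg (fun i _ => by simpa using Ineg_mem_filtrationShift hB i)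
    fun i hi => by
      simpa [sub_eq_add_neg, add_comm] using
        lie_L_I_mem_filtrationShift hB (n := -i) (by linarith [hmu i hi])

end THV

open THV in
theorem maxdeg_bracket_L_succ_le_general
    (V : Type) [LieRing V] [LieAlgebra ℂ V] [THV V]
    (ψ : nPlus V →ₗ⁅ℂ⁆ ℂ)
    (B : Module.Basis WIdx ℂ (Mpsi V ψ)) (hB : IsStdBasis V ψ B)
    (k : ℕ) (lam : ℕ →₀ ℕ) (mu : ℕ →₀ ℕ)
    (hvanish : ∀ i ≤ k, lam i = 0 ∧ mu i = 0) :
    maxdeg V ψ B (⁅ιV V (THV.L ((k : ℤ) + 1)), Lword V lam * Iword V mu⁆ • mw V ψ)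
      ≤ (((pdeg lam : ℤ) + (pdeg mu : ℤ) - (k : ℤ) - 1 : ℤ) : WithBot ℤ) := by
  have hparts : ∀ i, lam i ≠ 0 ∨ mu i ≠ 0 → (k : ℤ) + 1 ≤ i := fun i hi => by
    by_contra h
    have := hvanish i (by omega)
    omega
  have hLword := lie_L_Lword_mem_filtrationShift hB fun i hi => hparts i (.inl hi)
  have hIword := lie_L_Iword_mem_filtrationShift hB fun i hi => hparts i (.inr hi)
  have hw := mw_mem_degFiltration hB
  have hIw : Iword V mu • mw V ψ ∈ degFiltration B Set.univ (pdeg mu) :=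
    degFiltration_mono (Set.subset_univ _) (by simp)
      (smul_mem_of_mem_filtrationShift (Iword_mem_filtrationShift hB mu) hw)
  refine maxdeg_le_of_mem_degFiltration (s := Set.univ) ?_
  rw [Ring.lie_mul, add_smul, mul_smul, mul_smul]
  refine add_mem ?_ ?_
  · convert smul_mem_of_mem_filtrationShift hLword hIw using 2; ring
  · convert smul_mem_of_mem_filtrationShift (Lword_mem_filtrationShift hB lam)
      (degFiltration_mono (Set.subset_univ _) le_rfl (smul_mem_of_mem_filtrationShift hIword hw))
      using 2
    ring

open THV in
/-- if `μ(i) = λ(i) = 0` for all `0 ≤ i ≤ k` then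
`maxdeg([L_{k+1}, L_{−λ}I_{−μ}]w) ≤ |λ| + |μ| − k − 1`. -/
theorem maxdeg_bracket_L_succ_le
    (V : Type) [LieRing V] [LieAlgebra ℂ V] [THV V]
    (ψ : nPlus V →ₗ⁅ℂ⁆ ℂ)
    (hL1 : ψ ⟨THV.L 1, L_mem_nPlus V le_rfl⟩ ≠ 0)
    (hL2 : ψ ⟨THV.L 2, L_mem_nPlus V one_le_two⟩ ≠ 0)
    (hI1 : ψ ⟨THV.I 1, I_mem_nPlus V le_rfl⟩ ≠ 0)
    (B : Module.Basis WIdx ℂ (Mpsi V ψ)) (hB : IsStdBasis V ψ B)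
    (k : ℕ) (lam : ℕ →₀ ℕ) (mu : ℕ →₀ ℕ) (hmu : mu 0 = 0)
    (hvanish : ∀ i ≤ k, lam i = 0 ∧ mu i = 0) :
    maxdeg V ψ B (⁅ιV V (THV.L ((k : ℤ) + 1)), Lword V lam * Iword V mu⁆ • mw V ψ)
      ≤ (((pdeg lam : ℤ) + (pdeg mu : ℤ) - (k : ℤ) - 1 : ℤ) : WithBot ℤ) :=
  maxdeg_bracket_L_succ_le_general V ψ B hB k lam mu hvanish
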